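/- arXiv:2102.04787 — 2 statements merged into one kernel-verified Lean document; each statement's English description precedes it below -/
import Mathlib

section
/- Let S ⊆ ℕ, let f₀ denote a fixed distinguished element, and let A = {(2n, f₀) : n ∈ ℕ} ∪ {(2n+1, w) : n ∈ S, w = w_n} where for each n ∈ S, w_n is some fixed element with w_n ≠ f₀. Define F : A → ℕ by F((k, x)) = k and G : ℕ → A by G(n) = (2n, f₀); both are injective. Then for any bijection H : A → ℕ satisfying the canonical witness property (for all a ∈ A, H(a) = F(a) or G(H(a)) = a), we have for every n ∈ ℕ: n ∈ S if and only if H((2(2n+1), f₀)) = 2(2n+1). -/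
/-!
Odd points of `A` are not in the range of `G`, so a canonical witness agrees with `F` there.
If `n ∈ S`, the value `2n+1` is therefore taken at `(2n+1, w n)`, and by injectivity
`H (2(2n+1), f₀)` cannot be `2n+1`, its only alternative to `2(2n+1)`. Conversely, if
`H (2(2n+1), f₀) = 2(2n+1)`, the preimage of `2n+1` is not `G (2n+1)`, so it is a point of `A`
with first coordinate `2n+1`, which exists only for `n ∈ S`.
-/

section CanonicalWitness

variable {α : Type*} {A : Set (ℕ × α)}

/-- Canonicity for the Cantor–Bernstein pair `F = Prod.fst`, `G n = (2n, f₀)`. -/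
def IsCanonicalWitness (f₀ : α) (H : A → ℕ) : Prop :=
  ∀ a : A, H a = (a : ℕ × α).1 ∨ ((2 * H a, f₀) : ℕ × α) = (a : ℕ × α)

variable {f₀ : α} {H : A → ℕ}

theorem apply_eq_fst_or_two_mul_apply_eq_fst (hcanon : IsCanonicalWitness f₀ H) (a : A) :
    H a = (a : ℕ × α).1 ∨ 2 * H a = (a : ℕ × α).1 :=
  (hcanon a).imp_right (congrArg Prod.fst)

theorem apply_eq_fst_of_odd (hcanon : IsCanonicalWitness f₀ H) {a : A}
    (hodd : Odd (a : ℕ × α).1) : H a = (a : ℕ × α).1 :=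
  (apply_eq_fst_or_two_mul_apply_eq_fst hcanon a).resolve_right fun h ↦
    Nat.not_even_iff_odd.mpr hodd (h ▸ even_two_mul (H a))

theorem eq_or_fst_eq_of_apply_eq (hcanon : IsCanonicalWitness f₀ H) {c : A} {m : ℕ}
    (hc : H c = m) : (c : ℕ × α) = (2 * m, f₀) ∨ (c : ℕ × α).1 = m := by
  rcases hcanon c with h | h
  · exact .inr (hc ▸ h.symm)
  · exact .inl (hc ▸ h.symm)

end CanonicalWitness

theorem mem_of_fst_eq_two_mul_add_one {α : Type*} {f₀ : α} {S : Set ℕ} {w : ℕ → α}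
    {A : Set (ℕ × α)}
    (hA : A = {p | (∃ n : ℕ, p = (2 * n, f₀)) ∨ (∃ n ∈ S, p = (2 * n + 1, w n))})
    {p : ℕ × α} (hp : p ∈ A) {n : ℕ} (hpn : p.1 = 2 * n + 1) : n ∈ S := by
  rcases hA ▸ hp with ⟨m, rfl⟩ | ⟨m, hm, rfl⟩
  · omega
  · obtain rfl : m = n := by simp only at hpn; omega
    exact hm

theorem stmt_11 (α : Type) (f₀ : α) (S : Set ℕ) (w : ℕ → α)
    (A : Set (ℕ × α))
    (hA : A = {p | (∃ n : ℕ, p = (2 * n, f₀)) ∨ (∃ n ∈ S, p = (2 * n + 1, w n))})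
    (H : A → ℕ)
    (hbij : Function.Bijective H)
    (hcanon : ∀ a : A, H a = (a : ℕ × α).1 ∨ ((2 * H a, f₀) : ℕ × α) = (a : ℕ × α)) :
    ∀ n : ℕ, n ∈ S ↔
      H ⟨(2 * (2 * n + 1), f₀), by rw [hA]; exact Or.inl ⟨2 * n + 1, rfl⟩⟩
        = 2 * (2 * n + 1) := by
  intro n
  set a : A := ⟨(2 * (2 * n + 1), f₀), hA ▸ .inl ⟨2 * n + 1, rfl⟩⟩
  constructor
  · intro hn
    let b : A := ⟨(2 * n + 1, w n), hA ▸ .inr ⟨n, hn, rfl⟩⟩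
    have hHb : H b = 2 * n + 1 := apply_eq_fst_of_odd hcanon (odd_two_mul_add_one n)
    refine (apply_eq_fst_or_two_mul_apply_eq_fst hcanon a).resolve_right fun h ↦ ?_
    have hHa : H a = 2 * n + 1 := by
      have h : 2 * H a = 2 * (2 * n + 1) := h
      omega
    have hab : a = b := hbij.injective (hHa.trans hHb.symm)
    have : 2 * (2 * n + 1) = 2 * n + 1 := congrArg (fun c : A ↦ (c : ℕ × α).1) hab
    omega
  · intro hHa
    obtain ⟨c, hc⟩ := hbij.surjective (2 * n + 1)
    rcases eq_or_fst_eq_of_apply_eq hcanon hc with hca | hc1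
    · rw [show c = a from Subtype.ext hca] at hc
      omega
    · exact mem_of_fst_eq_two_mul_add_one hA c.2 hc1
end

section
/- The block-coding map on Cantor space is a strictly monotone order embedding for the lexicographic order: define c : (ℕ → Bool) → (ℕ → Bool) by replacing each bit 0 of the input by the block 1,0,0,1 and each bit 1 by the block 1,0,1 (concatenating the blocks in order). Then for all f, g : ℕ → Bool, f < g in the lexicographic order if and only if c(f) < c(g) in the lexicographic order. -/
/-- The block assigned to a bit: `false ↦ [1,0,0,1]`, `true ↦ [1,0,1]`. -/
def block (b : Bool) : List Bool :=
  if b then [true, false, true] else [true, false, false, true]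

/-- The concatenation of the blocks of the first `n` bits of `f`. -/
def codePrefix (f : ℕ → Bool) (n : ℕ) : List Bool :=
  ((List.range n).map (fun i => block (f i))).flatten

/-- The block-coding map on Cantor space: replace each bit `0` by `1,0,0,1`
and each bit `1` by `1,0,1`, concatenating the blocks in order. -/
def code (f : ℕ → Bool) (k : ℕ) : Bool :=
  (codePrefix f (k + 1)).getD k false

/-- The lexicographic strict order on Cantor space. -/
def lexLt (f g : ℕ → Bool) : Prop :=
  ∃ n, (∀ k < n, f k = g k) ∧ f n = false ∧ g n = true

/-!
Both blocks begin with `1, 0` and first differ at their third letter: `0` in the block of `0`,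
`1` in the block of `1`. So if `f` and `g` first differ at `n`, with `f n = 0` and `g n = 1`, then
`code f` and `code g` agree on the code of the common prefix followed by `1, 0`, after which
`code f` reads `0` and `code g` reads `1`. Hence the coding is strictly monotone, and since the
lexicographic order on `ℕ → Bool` is linear, it also reflects the order.
-/

theorem lexLt_iff_toLex_lt (f g : ℕ → Bool) : lexLt f g ↔ toLex f < toLex g := by
  simp only [lexLt, ← Bool.lt_iff]
  rfl

lemma codePrefix_succ (f : ℕ → Bool) (n : ℕ) :
    codePrefix f (n + 1) = codePrefix f n ++ block (f n) := by
  simp [codePrefix, List.range_succ]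

lemma le_length_codePrefix (f : ℕ → Bool) (n : ℕ) : n ≤ (codePrefix f n).length := by
  induction n with
  | zero => simp [codePrefix]
  | succ n ih =>
    have : 1 ≤ (block (f n)).length := by cases f n <;> simp [block]
    rw [codePrefix_succ, List.length_append]
    omega

lemma codePrefix_prefix_of_le (f : ℕ → Bool) {m n : ℕ} (h : m ≤ n) :
    codePrefix f m <+: codePrefix f n := by
  induction n, h using Nat.le_induction with
  | base => exact List.prefix_refl _
  | succ n _ ih => exact ih.trans (codePrefix_succ f n ▸ List.prefix_append _ _)

lemma code_eq_getD_codePrefix (f : ℕ → Bool) {k m : ℕ} (hk : k < (codePrefix f m).length) :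
    code f k = (codePrefix f m).getD k false := by
  have hk' : k < (codePrefix f (k + 1)).length :=
    (le_length_codePrefix f (k + 1)).trans_lt' k.lt_succ_self
  rw [code, List.getD_eq_getElem _ _ hk, List.getD_eq_getElem _ _ hk']
  rcases le_total (k + 1) m with h | h
  · exact (codePrefix_prefix_of_le f h).getElem hk'
  · exact ((codePrefix_prefix_of_le f h).getElem hk).symm

lemma codePrefix_congr {f g : ℕ → Bool} {n : ℕ} (h : ∀ k < n, f k = g k) :
    codePrefix f n = codePrefix g n := by
  unfold codePrefix
  congr 1
  exact List.map_congr_left fun i hi => by rw [h i (List.mem_range.mp hi)]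

lemma code_length_codePrefix_add (f : ℕ → Bool) (n : ℕ) {i : ℕ}
    (hi : i < (block (f n)).length) :
    code f ((codePrefix f n).length + i) = (block (f n))[i] := by
  rw [code_eq_getD_codePrefix f (m := n + 1) (by simp [codePrefix_succ, hi]), codePrefix_succ,
    List.getD_eq_getElem?_getD, List.getElem?_append_right (by omega)]
  simp [hi]

theorem lexLt_code {f g : ℕ → Bool} (h : lexLt f g) : lexLt (code f) (code g) := by
  obtain ⟨n, hagree, hf, hg⟩ := h
  have hL := codePrefix_congr hagree
  have hblock (φ : ℕ → Bool) {i : ℕ} (hi : i < 3) :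
      code φ ((codePrefix φ n).length + i) = (block (φ n))[i]'(by
        cases φ n <;> simp [block] <;> omega) :=
    code_length_codePrefix_add φ n _
  refine ⟨(codePrefix f n).length + 2, fun k hk => ?_, ?_, ?_⟩
  · rcases lt_or_ge k (codePrefix f n).length with hk' | hk'
    · rw [code_eq_getD_codePrefix f hk', code_eq_getD_codePrefix g (hL ▸ hk'), hL]
    · obtain ⟨i, rfl⟩ := Nat.exists_eq_add_of_le hk'
      have hi : i < 2 := by omega
      rw [hblock f (by omega), hL, hblock g (by omega), hf, hg]
      interval_cases i <;> rfl
  · rw [hblock f (by omega), hf]; rfl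
  · rw [hL, hblock g (by omega), hg]; rfl

theorem stmt_18 (f g : ℕ → Bool) :
    lexLt f g ↔ lexLt (code f) (code g) := by
  have hmono : StrictMono fun x : Lex (ℕ → Bool) => toLex (code (ofLex x)) := fun x y h =>
    (lexLt_iff_toLex_lt _ _).1 (lexLt_code ((lexLt_iff_toLex_lt (ofLex x) (ofLex y)).2 h))
  rw [lexLt_iff_toLex_lt, lexLt_iff_toLex_lt]
  exact hmono.lt_iff_lt.symm
end
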